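/- Incompleteness via infinite terms: with Φ = { nat(z), nat(s(x)) ⟸ nat(x) }, the infinite term s^ω = s(s(s(…))) satisfies nat in the greatest coinductive Herbrand model (nat(s^ω) ∈ gfp(T_Φ)), yet there is no finite proof term e with Φ ⊢ e : nat(s^ω), since the Nu rule only concludes Horn formulas, not atomic formulas, so any proof evidence would have to be the infinite term σ(σ(σ(…))). -/
import Mathlib


/-- Possibly infinite ground terms over the signature {z/0, s/1}: sⁿ(z) is coded by
`n : ℕ∞` and the infinite term s^ω = s(s(s(...))) by `⊤`. -/
abbrev GT8 := ℕ∞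

/-- The infinite term s^ω (it satisfies s^ω = s(s^ω), i.e. ⊤ = ⊤ + 1). -/
def sOmega : GT8 := ⊤

/-- Terms with variables over {z/0, s/1}: either a ground term, or sⁿ(x) for a
variable x. Since the only predicate is the unary `nat`, an atom nat(t) is identified
with the term t; note that atoms may mention the infinite term. -/
abbrev Tm8 := GT8 ⊕ (ℕ × ℕ)

/-- Evaluation of a term under a ground substitution. -/
def eval8 (g : ℕ → GT8) : Tm8 → GT8
  | .inl t => t
  | .inr (n, x) => g x + n

/-- Substitution of terms for variables. -/
def subst8 (σ : ℕ → Tm8) : Tm8 → Tm8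
  | .inl t => .inl t
  | .inr (n, x) =>
      match σ x with
      | .inl t => .inl (t + n)
      | .inr (m, y) => .inr (m + n, y)

/-- Horn formulas B₁,…,Bₙ ⇒ A (atoms are identified with terms). -/
structure Horn8 where
  body : List Tm8
  head : Tm8

/-- One-step consequence operator of a set of Horn clauses. -/
def T8 (P : Set Horn8) (s : Set GT8) : Set GT8 :=
  { a | ∃ C ∈ P, ∃ g : ℕ → GT8, (∀ B ∈ C.body, eval8 g B ∈ s) ∧ a = eval8 g C.head }

/-- Greatest coinductive Herbrand model: the greatest fixed point of `T8 P`,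
given (Knaster–Tarski) as the union of all post-fixed points. -/
def Model8 (P : Set Horn8) : Set GT8 := sSup { s | s ⊆ T8 P s }

/-- Formulas: atomic or Horn. -/
inductive Formula8
  | atom : Tm8 → Formula8
  | horn : List Tm8 → Tm8 → Formula8

/-- Proof terms of corecursive resolution (finite!). -/
inductive PTm
  | kon : ℕ → PTm            -- clause constant κ
  | hyp : ℕ → PTm            -- hypothesis variable α, β
  | app : PTm → List PTm → PTm  -- κ e₁ … eₙ
  | lam : List ℕ → PTm → PTm    -- λβ₁,…,βₙ. e
  | nu : ℕ → PTm → PTm          -- να. e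

/-- Head normal form. -/
def isHNF (e : PTm) : Prop :=
  ∃ βs κ es, e = PTm.lam βs (PTm.app (PTm.kon κ) es)

/-- Environments: judgements assigning proof-term constants/variables to Horn clauses. -/
abbrev Env8 := List (PTm × Horn8)

/-- The typing judgement Φ ⊢ e : F of corecursive resolution: clause application by
term matching, lambda abstraction introducing hypotheses, and the Nu rule, which
concludes only (non-atomic) Horn formulas. -/
inductive Ty8 : Env8 → PTm → Formula8 → Prop
  | app {Φ : Env8} {h : PTm} {es : List PTm} {Bs : List Tm8} {A : Tm8}
      (σ : ℕ → Tm8) (hmem : (h, Horn8.mk Bs A) ∈ Φ)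
      (hlen : es.length = Bs.length)
      (hargs : ∀ i : Fin Bs.length,
        Ty8 Φ (es.get (i.cast hlen.symm)) (.atom (subst8 σ (Bs.get i)))) :
      Ty8 Φ (.app h es) (.atom (subst8 σ A))
  | lam {Φ : Env8} {βs : List ℕ} {e : PTm} {Bs : List Tm8} {A : Tm8}
      (hlen : βs.length = Bs.length)
      (hbody : Ty8 ((βs.map PTm.hyp).zip (Bs.map (Horn8.mk [])) ++ Φ) e (.atom A)) :
      Ty8 Φ (.lam βs e) (.horn Bs A)
  | nu {Φ : Env8} {a : ℕ} {e : PTm} {Bs : List Tm8} {A : Tm8}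
      (hhnf : isHNF e)
      (hbody : Ty8 ((PTm.hyp a, Horn8.mk Bs A) :: Φ) e (.horn Bs A)) :
      Ty8 Φ (.nu a e) (.horn Bs A)

/-- The environment Φ = { ζ : nat(z), σ : nat(s(x)) ⇐ nat(x) }. -/
def Phi8 : Env8 :=
  [(PTm.kon 0, ⟨[], Sum.inl 0⟩),                 -- ζ : nat(z)
   (PTm.kon 1, ⟨[Sum.inr (0, 0)], Sum.inr (1, 0)⟩)]  -- σ : nat(x) ⇒ nat(s(x))

def clauses8 : Set Horn8 := { H | ∃ p, (p, H) ∈ Phi8 }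

lemma no_top {Φ : Env8} {e : PTm} {F : Formula8} (h : Ty8 Φ e F) :
    Φ = Phi8 → F = Formula8.atom (.inl sOmega) → False := by
  induction h with
  | app σ hmem hlen hargs ih =>
    intro hΦ hF
    subst hΦ
    simp only [Formula8.atom.injEq] at hF
    simp only [Phi8, List.mem_cons, List.not_mem_nil, or_false, Prod.mk.injEq] at hmem
    rcases hmem with ⟨-, hC⟩ | ⟨-, hC⟩
    · -- clause ζ : nat(z)
      obtain ⟨hBs, hA⟩ := Horn8.mk.injEq .. ▸ hC
      subst hA
      simp [subst8, sOmega] at hF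
    · -- clause σ : nat(x) ⇒ nat(s(x))
      obtain ⟨hBs, hA⟩ := Horn8.mk.injEq .. ▸ hC
      subst hBs; subst hA
      -- head : subst8 σ (inr (1,0)) = inl ⊤
      rcases hσ : σ 0 with t | ⟨m, y⟩
      · have hF' : Sum.inl (t + (1:ℕ)) = (Sum.inl sOmega : Tm8) := by
          rw [← hF]; simp [subst8, hσ]
        simp only [Sum.inl.injEq] at hF'
        have ht : t = ⊤ := by
          by_contra hne
          lift t to ℕ using hne
          simp [sOmega] at hF'
        subst ht
        have := ih ⟨0, by simp⟩ rfl ?_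
        · exact this
        · simp [subst8, hσ, sOmega]
      · have hF' : (Sum.inr (m + 1, y) : Tm8) = Sum.inl sOmega := by
          rw [← hF]; simp [subst8, hσ]
        simp at hF'
  | lam hlen hbody ih => intro _ hF; simp at hF
  | nu hhnf hbody ih => intro _ hF; simp at hF

/-- incompleteness via infinite terms: with
Φ = { nat(z), nat(s(x)) ⇐ nat(x) }, (a) the infinite term s^ω satisfies nat in the
greatest coinductive Herbrand model, nat(s^ω) ∈ gfp(T_Φ); yet (b) there is no (finite)
proof term e with Φ ⊢ e : nat(s^ω). -/
theorem stmt8 :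
    sOmega ∈ Model8 clauses8 ∧
    ¬ ∃ e : PTm, Ty8 Phi8 e (.atom (.inl sOmega)) := by
  constructor
  · -- (a): {⊤} is a post-fixed point of T8 clauses8
    simp only [Model8, Set.sSup_eq_sUnion, Set.mem_sUnion]
    refine ⟨{(⊤ : GT8)}, ?_, rfl⟩
    intro a ha
    rcases ha with rfl
    refine ⟨⟨[Sum.inr (0, 0)], Sum.inr (1, 0)⟩, ⟨PTm.kon 1, by simp [Phi8]⟩,
      fun _ => ⊤, ?_, ?_⟩
    · intro B hB
      simp at hB
      subst hB
      simp [eval8]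
    · simp [eval8]
  · -- (b): no finite derivation
    rintro ⟨e, he⟩
    exact no_top he rfl rfl
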